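/- For every positive integer n, the apex n×n grid A_n is K_6-minor-free. -/

import Mathlib

/-- A set of vertices is connected in `G` if the induced subgraph is connected
(in particular, it is nonempty). -/
def ConnectedIn {V : Type*} (G : SimpleGraph V) (S : Set V) : Prop :=
  (G.induce S).Connected

/-- `H` is a minor of `G`: there is a minor model of `H` in `G`, i.e. a family of
nonempty, connected, pairwise disjoint branch sets, with an edge of `G` between the
branch sets of any two vertices adjacent in `H`. -/
def IsMinor {α β : Type*} (H : SimpleGraph α) (G : SimpleGraph β) : Prop :=
  ∃ φ : α → Set β,
    (∀ a, ConnectedIn G (φ a)) ∧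
    (Pairwise fun a b => Disjoint (φ a) (φ b)) ∧
    (∀ a b : α, H.Adj a b → ∃ u ∈ φ a, ∃ v ∈ φ b, G.Adj u v)

/-- `H` is an induced minor of `G`: as for a minor model, but two distinct branch sets
are joined by an edge of `G` *iff* the corresponding vertices are adjacent in `H`. -/
def IsInducedMinor {α β : Type*} (H : SimpleGraph α) (G : SimpleGraph β) : Prop :=
  ∃ φ : α → Set β,
    (∀ a, ConnectedIn G (φ a)) ∧
    (Pairwise fun a b => Disjoint (φ a) (φ b)) ∧
    (∀ a b : α, a ≠ b → (H.Adj a b ↔ ∃ u ∈ φ a, ∃ v ∈ φ b, G.Adj u v))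

/-- `G` is a region intersection graph over `H`: every vertex `v` of `G` is assigned a
connected subgraph (region) `R v` of `H` such that two distinct vertices of `G` are
adjacent iff their regions intersect. -/
def IsRIG {α β : Type*} (G : SimpleGraph α) (H : SimpleGraph β) : Prop :=
  ∃ R : α → Set β,
    (∀ v, ConnectedIn H (R v)) ∧
    (∀ u v : α, u ≠ v → (G.Adj u v ↔ (R u ∩ R v).Nonempty))

/-- Identification relation used to build the internal vertices of the `ℓ`-subdivision:
the `i`-th internal vertex of the edge directed as `(u, v)` equals the `(ℓ-1-i)`-th
internal vertex of the edge directed as `(v, u)`. -/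
def SubdivRel {V : Type*} (G : SimpleGraph V) (ℓ : ℕ) :
    ({d : V × V // G.Adj d.1 d.2} × Fin ℓ) → ({d : V × V // G.Adj d.1 d.2} × Fin ℓ) → Prop :=
  fun a b => a.1.1.1 = b.1.1.2 ∧ a.1.1.2 = b.1.1.1 ∧ (a.2 : ℕ) + (b.2 : ℕ) + 1 = ℓ

/-- Vertices of the `ℓ`-subdivision of `G`: the branching (original) vertices together
with `ℓ` internal (subdivision) vertices on each edge. -/
def SubdivVert {V : Type*} (G : SimpleGraph V) (ℓ : ℕ) : Type _ :=
  V ⊕ Quot (SubdivRel G ℓ)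

/-- The `ℓ`-subdivision `G^(ℓ)` of `G`: every edge of `G` is replaced by a path with
`ℓ + 1` edges (so with `ℓ` new internal vertices). -/
def subdiv {V : Type*} (G : SimpleGraph V) (ℓ : ℕ) : SimpleGraph (SubdivVert G ℓ) :=
  SimpleGraph.fromRel (fun x y =>
    (ℓ = 0 ∧ ∃ u v : V, G.Adj u v ∧ x = Sum.inl u ∧ y = Sum.inl v) ∨
    (∃ (d : {d : V × V // G.Adj d.1 d.2}) (i : Fin ℓ),
      (i : ℕ) = 0 ∧ x = Sum.inl d.1.1 ∧ y = Sum.inr (Quot.mk _ (d, i))) ∨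
    (∃ (d : {d : V × V // G.Adj d.1 d.2}) (i j : Fin ℓ),
      (i : ℕ) + 1 = (j : ℕ) ∧ x = Sum.inr (Quot.mk _ (d, i)) ∧ y = Sum.inr (Quot.mk _ (d, j))))

/-- Adjacency in the `n × n` grid graph. -/
def GridAdj (n : ℕ) : (Fin n × Fin n) → (Fin n × Fin n) → Prop := fun p q =>
  (p.1 = q.1 ∧ (p.2 : ℕ) + 1 = (q.2 : ℕ)) ∨ ((p.1 : ℕ) + 1 = (q.1 : ℕ) ∧ p.2 = q.2)

/-- The apex `n × n` grid `A_n`: the `n × n` grid together with one extra vertex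
adjacent to all grid vertices. -/
def apexGrid (n : ℕ) : SimpleGraph ((Fin n × Fin n) ⊕ Unit) :=
  SimpleGraph.fromRel (fun x y =>
    (∃ p q : Fin n × Fin n, x = Sum.inl p ∧ y = Sum.inl q ∧ GridAdj n p q) ∨
    (∃ p : Fin n × Fin n, x = Sum.inl p ∧ y = Sum.inr ()))

/-- The disjoint union of `n` copies of the graph `G`. -/
def nCopies {V : Type*} (n : ℕ) (G : SimpleGraph V) : SimpleGraph (Fin n × V) :=
  SimpleGraph.fromRel (fun x y => x.1 = y.1 ∧ G.Adj x.2 y.2)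

/-!
Deleting the apex, together with the branch set containing it, from a `K₆` model in `A_n` leaves a
`K₅` model in the square lattice `ℤ²`, so it suffices to show that `ℤ²` has no `K₅` minor.

This is a mod-2 intersection argument. For a lattice walk `W` and a point `o`, `crossLine o W` counts
the crossings of `W` with a line through `o`; it depends only on the ends of `W` when `W` avoids `o`,
and obeys a reciprocity law for disjoint walks. Hence, for distinct points `a, b, c, d`, the sum of
these counts over a triangle on `b, c, d` whose sides avoid `a` and the opposite corner depends only
on the four points, does not change when one of them moves, and is `1` for four consecutive points
of a row. In a `K₅` model, the arcs between four of the hubs form such a triangle, and reciprocity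
together with the fifth hub forces its sum to be `0`.
-/

theorem ite_xor_eq_add (p q : Prop) [Decidable p] [Decidable q] :
    (if Xor p q then 1 else 0 : ZMod 2) = (if p then 1 else 0) + (if q then 1 else 0) := by
  by_cases hp : p <;> by_cases hq : q <;> simp [hp, hq, CharTwo.add_self_eq_zero]

namespace SimpleGraph.Walk

variable {V : Type*} {G : SimpleGraph V}

theorem apply_eq_apply_of_adj {α : Type*} {S : Set V} {f : V → α}
    (hf : ∀ x y, G.Adj x y → x ∈ S → y ∈ S → f x = f y) :
    ∀ {u v : V} (W : G.Walk u v), (∀ x ∈ W.support, x ∈ S) → f u = f v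
  | _, _, nil, _ => rfl
  | _, _, cons h W, hW => by
    simp only [support_cons, List.mem_cons, forall_eq_or_imp] at hW
    exact (hf _ _ h hW.1 (hW.2 _ W.start_mem_support)).trans (apply_eq_apply_of_adj hf W hW.2)

def parity (P : V → V → Prop) [DecidableRel P] {u v : V} (W : G.Walk u v) : ZMod 2 :=
  W.darts.countP (fun d => P d.fst d.snd)

variable (P Q : V → V → Prop) [DecidableRel P] [DecidableRel Q]

@[simp] theorem parity_nil {u : V} : (nil : G.Walk u u).parity P = 0 := by
  simp [parity]

@[simp] theorem parity_cons {u v w : V} (h : G.Adj u v) (W : G.Walk v w) :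
    (cons h W).parity P = (if P u v then 1 else 0) + W.parity P := by
  simp only [parity, darts_cons, List.countP_cons]
  split_ifs <;> simp_all [add_comm]

@[simp] theorem parity_append {u v w : V} (W : G.Walk u v) (W' : G.Walk v w) :
    (W.append W').parity P = W.parity P + W'.parity P := by
  simp [parity, darts_append, List.countP_append]

theorem parity_reverse (hP : ∀ x y, P y x ↔ P x y) {u v : V} (W : G.Walk u v) :
    W.reverse.parity P = W.parity P := by
  induction W with
  | nil => simp
  | cons h W ih =>
    rw [reverse_cons, parity_append, ih, parity_cons, parity_cons, parity_nil]
    simp only [hP]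
    ring

variable {P Q} in
theorem parity_congr {u v : V} {W : G.Walk u v}
    (h : ∀ d ∈ W.darts, P d.fst d.snd ↔ Q d.fst d.snd) : W.parity P = W.parity Q := by
  unfold parity
  congr 1
  exact List.countP_congr fun d hd => by simpa using h d hd

theorem parity_xor {u v : V} (W : G.Walk u v) :
    W.parity (fun x y => Xor (P x y) (Q x y)) = W.parity P + W.parity Q := by
  induction W with
  | nil => simp
  | cons h W ih => simp only [parity_cons, ih, ite_xor_eq_add]; ring

theorem parity_xor_endpoints (R : V → Prop) [DecidablePred R] {u v : V} (W : G.Walk u v) :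
    W.parity (fun x y => Xor (R x) (R y)) = (if R u then 1 else 0) + (if R v then 1 else 0) := by
  induction W with
  | nil => rw [parity_nil]; exact (CharTwo.add_self_eq_zero _).symm
  | cons h W ih => rw [parity_cons, ih, ite_xor_eq_add]; grind

variable {P} in
theorem parity_eq_zero_of_notMem_support {z : V} (hP : ∀ x y, P x y → x = z ∨ y = z)
    {u v : V} {W : G.Walk u v} (hz : z ∉ W.support) : W.parity P = 0 := by
  have : W.darts.countP (fun d => P d.fst d.snd) = 0 := by
    rw [List.countP_eq_zero]
    intro d hd hPd
    rcases hP _ _ (of_decide_eq_true hPd) with rfl | rfl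
    · exact hz (W.dart_fst_mem_support_of_mem_darts hd)
    · exact hz (W.dart_snd_mem_support_of_mem_darts hd)
  simp [parity, this]

end SimpleGraph.Walk

section Minors

open SimpleGraph

variable {α β γ : Type*} {G : SimpleGraph β} {G' : SimpleGraph γ}

theorem ConnectedIn.exists_walk {S : Set β} (h : ConnectedIn G S) {u v : β} (hu : u ∈ S)
    (hv : v ∈ S) : ∃ W : G.Walk u v, ∀ x ∈ W.support, x ∈ S := by
  obtain ⟨w⟩ := h.preconnected ⟨u, hu⟩ ⟨v, hv⟩
  have hw : ∀ x ∈ (w.map (Embedding.induce S).toHom).support, x ∈ S := by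
    intro x hx
    rw [Walk.support_map, List.mem_map] at hx
    obtain ⟨y, -, rfl⟩ := hx
    exact y.2
  exact ⟨_, hw⟩

theorem ConnectedIn.image (f : G →g G') {S : Set β} (h : ConnectedIn G S) :
    ConnectedIn G' (f '' S) :=
  h.map (induceHom f (Set.mapsTo_image f S)) (Set.surjective_mapsTo_image_restrict f S)

theorem ConnectedIn.preimage_val {S T : Set β} (h : ConnectedIn G S) (hST : S ⊆ T) :
    ConnectedIn (G.induce T) ((↑) ⁻¹' S) :=
  let f : G.induce S →g (G.induce T).induce ((↑) ⁻¹' S) := ⟨fun v => ⟨⟨v.1, hST v.2⟩, v.2⟩, id⟩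
  h.map f fun ⟨⟨v, _⟩, hv⟩ => ⟨⟨v, hv⟩, rfl⟩

theorem IsMinor.map {H : SimpleGraph α} (f : G →g G') (hf : Function.Injective f)
    (h : IsMinor H G) : IsMinor H G' := by
  obtain ⟨φ, hconn, hdisj, hadj⟩ := h
  refine ⟨fun a => f '' φ a, fun a => (hconn a).image f,
    fun a b hab => (Set.disjoint_image_iff hf).mpr (hdisj hab), fun a b hab => ?_⟩
  obtain ⟨u, hu, v, hv, huv⟩ := hadj a b hab
  exact ⟨f u, Set.mem_image_of_mem f hu, f v, Set.mem_image_of_mem f hv, f.map_adj huv⟩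

/-- Drop the branch set containing `x`, if any. -/
theorem IsMinor.induce_compl_singleton {k : ℕ} (h : IsMinor (completeGraph (Fin (k + 1))) G)
    (x : β) : IsMinor (completeGraph (Fin k)) (G.induce {x}ᶜ) := by
  obtain ⟨φ, hconn, hdisj, hadj⟩ := h
  obtain ⟨i, hi⟩ : ∃ i, ∀ j, j ≠ i → x ∉ φ j := by
    by_cases hx : ∃ i, x ∈ φ i
    · obtain ⟨i, hi⟩ := hx
      exact ⟨i, fun j hj hxj => Set.disjoint_left.mp (hdisj hj) hxj hi⟩
    · simp only [not_exists] at hx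
      exact ⟨0, fun j _ => hx j⟩
  have hsub (a : Fin k) : φ (i.succAbove a) ⊆ {x}ᶜ := fun y hy hyx =>
    hi _ (Fin.succAbove_ne i a) (Set.mem_singleton_iff.mp hyx ▸ hy)
  refine ⟨fun a => (↑) ⁻¹' φ (i.succAbove a), fun a => (hconn _).preimage_val (hsub a),
    fun a b hab => (hdisj (Fin.succAbove_right_injective.ne hab)).preimage _, fun a b hab => ?_⟩
  obtain ⟨u, hu, v, hv, huv⟩ := hadj _ _ (Fin.succAbove_right_injective.ne hab)
  exact ⟨⟨u, hsub a hu⟩, hu, ⟨v, hsub b hv⟩, hv, huv⟩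

end Minors

def latticeGraph : SimpleGraph (ℤ × ℤ) where
  Adj p q := p.1 = q.1 ∧ (p.2 + 1 = q.2 ∨ q.2 + 1 = p.2) ∨ p.2 = q.2 ∧ (p.1 + 1 = q.1 ∨ q.1 + 1 = p.1)
  symm := ⟨fun _ _ h => by omega⟩
  loopless := ⟨fun _ h => by omega⟩

@[simp] theorem latticeGraph_adj {p q : ℤ × ℤ} : latticeGraph.Adj p q ↔
    p.1 = q.1 ∧ (p.2 + 1 = q.2 ∨ q.2 + 1 = p.2) ∨ p.2 = q.2 ∧ (p.1 + 1 = q.1 ∨ q.1 + 1 = p.1) :=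
  Iff.rfl

namespace Lattice

open SimpleGraph Walk

/-- `p → q` is a horizontal step across the vertical line `x + ½`, at a height satisfying `P`. -/
def HStep (x : ℤ) (P : ℤ → Prop) (p q : ℤ × ℤ) : Prop :=
  p.2 = q.2 ∧ P p.2 ∧ (p.1 = x ∧ q.1 = x + 1 ∨ q.1 = x ∧ p.1 = x + 1)

def VStep (x y : ℤ) (p q : ℤ × ℤ) : Prop :=
  p.1 = x ∧ q.1 = x ∧ (p.2 = y ∧ q.2 = y + 1 ∨ q.2 = y ∧ p.2 = y + 1)

instance (x : ℤ) (P : ℤ → Prop) [DecidablePred P] : DecidableRel (HStep x P) :=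
  fun _ _ => by unfold HStep; infer_instance

instance (x y : ℤ) : DecidableRel (VStep x y) :=
  fun _ _ => by unfold VStep; infer_instance

theorem hStep_comm {x : ℤ} {P : ℤ → Prop} {p q : ℤ × ℤ} : HStep x P q p ↔ HStep x P p q := by
  unfold HStep
  constructor <;> rintro ⟨h, hP, hx⟩ <;> exact ⟨h.symm, h ▸ hP, by omega⟩

variable {u v : ℤ × ℤ}

/-- Parity of the number of crossings of `W` with the downward vertical ray from `p + (½, ½)`. -/
def crossDown (p : ℤ × ℤ) (W : latticeGraph.Walk u v) : ZMod 2 :=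
  W.parity (HStep p.1 (· ≤ p.2))

/-- Parity of the number of crossings of `W` with the upward vertical ray from `o - (½, ½)`. -/
def crossUp (o : ℤ × ℤ) (W : latticeGraph.Walk u v) : ZMod 2 :=
  W.parity (HStep (o.1 - 1) (o.2 ≤ ·))

/-- Parity of the number of crossings of `W` with the line through `o` formed by the rays of
`crossUp o` and `crossDown o` and the diagonal joining them, which meets the lattice only at `o`. -/
def crossLine (o : ℤ × ℤ) (W : latticeGraph.Walk u v) : ZMod 2 :=
  crossUp o W + crossDown o W

section Basic

variable {w : ℤ × ℤ} (o : ℤ × ℤ)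

@[simp] theorem crossDown_append (W : latticeGraph.Walk u v) (W' : latticeGraph.Walk v w) :
    crossDown o (W.append W') = crossDown o W + crossDown o W' :=
  parity_append _ _ _

@[simp] theorem crossLine_append (W : latticeGraph.Walk u v) (W' : latticeGraph.Walk v w) :
    crossLine o (W.append W') = crossLine o W + crossLine o W' := by
  simp only [crossLine, crossUp, crossDown, parity_append]; ring

@[simp] theorem crossDown_reverse (W : latticeGraph.Walk u v) :
    crossDown o W.reverse = crossDown o W :=
  parity_reverse _ (fun _ _ => hStep_comm) _

@[simp] theorem crossLine_reverse (W : latticeGraph.Walk u v) :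
    crossLine o W.reverse = crossLine o W := by
  simp only [crossLine, crossUp, crossDown, parity_reverse _ (fun _ _ => hStep_comm)]

end Basic

theorem crossDown_up (x y : ℤ) (W : latticeGraph.Walk u v) :
    crossDown (x, y + 1) W = crossDown (x, y) W + W.parity (HStep x (· = y + 1)) := by
  rw [crossDown, crossDown, ← parity_xor]
  refine parity_congr fun d _ => ?_
  simp only [HStep, Xor]
  omega

/-- Discrete Stokes formula for the half-column `{x + 1} × (-∞, y]`: its boundary is crossed by the
rays of `crossDown (x, y)` and `crossDown (x + 1, y)` and by one vertical step. -/
theorem crossDown_add_crossDown_right (x y : ℤ) (W : latticeGraph.Walk u v) :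
    crossDown (x, y) W + crossDown (x + 1, y) W + W.parity (VStep (x + 1) y) =
      (if u.1 = x + 1 ∧ u.2 ≤ y then 1 else 0) + (if v.1 = x + 1 ∧ v.2 ≤ y then 1 else 0) := by
  rw [crossDown, crossDown, ← parity_xor, ← parity_xor,
    ← parity_xor_endpoints (fun p : ℤ × ℤ => p.1 = x + 1 ∧ p.2 ≤ y)]
  refine parity_congr fun d hd => ?_
  have := d.adj
  simp only [latticeGraph_adj, HStep, VStep, Xor] at this ⊢
  omega

theorem crossDown_add_crossDown_of_adj {a b p q : ℤ × ℤ} (A : latticeGraph.Walk a b)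
    (hpq : latticeGraph.Adj p q) (hp : p ∉ A.support) (hq : q ∉ A.support) :
    crossDown p A + crossDown q A =
      (if HStep (a.1 - 1) (a.2 ≤ ·) p q then 1 else 0) +
        (if HStep (b.1 - 1) (b.2 ≤ ·) p q then 1 else 0) := by
  wlog h : q = (p.1 + 1, p.2) ∨ q = (p.1, p.2 + 1) generalizing p q
  · have h' : p = (q.1 + 1, q.2) ∨ p = (q.1, q.2 + 1) := by
      simp only [latticeGraph_adj, Prod.ext_iff] at hpq h ⊢; omega
    rw [add_comm, this hpq.symm hq hp h']
    simp only [hStep_comm]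
  obtain ⟨x, y⟩ := p
  rcases h with rfl | rfl
  · have hV : A.parity (VStep (x + 1) y) = 0 :=
      parity_eq_zero_of_notMem_support (z := (x + 1, y))
        (fun p q h => by simp only [VStep, Prod.ext_iff] at h ⊢; omega) hq
    have := crossDown_add_crossDown_right x y A
    rw [hV, add_zero] at this
    have hR (c : ℤ × ℤ) : HStep (c.1 - 1) (c.2 ≤ ·) (x, y) (x + 1, y) ↔ c.1 = x + 1 ∧ c.2 ≤ y := by
      simp only [HStep, true_and]; omega
    simp only [this, hR]
  · have hH : A.parity (HStep x (· = y + 1)) = 0 :=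
      parity_eq_zero_of_notMem_support (z := (x, y + 1))
        (fun p q h => by simp only [HStep, Prod.ext_iff] at h ⊢; omega) hq
    rw [crossDown_up, hH, add_zero, CharTwo.add_self_eq_zero]
    simp [HStep]

/-- For disjoint walks `A : a → b` and `B : c → d`, the rays hanging down from the ends of `B`
meet `A` as often, modulo 2, as the rays rising from the ends of `A` meet `B`. -/
theorem crossDown_add_crossDown_eq_crossUp_add_crossUp {a b c d : ℤ × ℤ}
    (A : latticeGraph.Walk a b) (B : latticeGraph.Walk c d)
    (hAB : ∀ x ∈ B.support, x ∉ A.support) :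
    crossDown c A + crossDown d A = crossUp a B + crossUp b B := by
  induction B with
  | nil => simp [crossUp, CharTwo.add_self_eq_zero]
  | cons h B ih =>
    simp only [support_cons, List.mem_cons, forall_eq_or_imp] at hAB
    have hstep := crossDown_add_crossDown_of_adj A h hAB.1 (hAB.2 _ B.start_mem_support)
    have := ih hAB.2
    simp only [crossUp, parity_cons] at this ⊢
    grind

theorem crossDown_eq_of_walk {e p q : ℤ × ℤ} (Z : latticeGraph.Walk e e)
    (W : latticeGraph.Walk p q) (hW : ∀ x ∈ W.support, x ∉ Z.support) :
    crossDown p Z = crossDown q Z := by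
  have := crossDown_add_crossDown_eq_crossUp_add_crossUp Z W hW
  rwa [CharTwo.add_self_eq_zero, CharTwo.add_eq_zero] at this

/-- The dual points `o + (½, ½)` and `o - (½, ½)` are separated only by the edges at `o`. -/
theorem crossDown_sub_one {e o : ℤ × ℤ} (Z : latticeGraph.Walk e e) (ho : o ∉ Z.support) :
    crossDown o Z = crossDown (o.1 - 1, o.2 - 1) Z := by
  obtain ⟨x, y⟩ := o
  have hH : Z.parity (HStep x (· = y)) = 0 :=
    parity_eq_zero_of_notMem_support (z := (x, y))
      (fun p q h => by simp only [HStep, Prod.ext_iff] at h ⊢; omega) ho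
  have hV : Z.parity (VStep x (y - 1)) = 0 :=
    parity_eq_zero_of_notMem_support (z := (x, y))
      (fun p q h => by simp only [VStep, Prod.ext_iff] at h ⊢; omega) ho
  have hup := crossDown_up x (y - 1) Z
  have hright := crossDown_add_crossDown_right (x - 1) (y - 1) Z
  simp only [sub_add_cancel, hH, hV, add_zero, CharTwo.add_self_eq_zero] at hup hright
  rw [hup, CharTwo.add_eq_zero.mp hright]

/-- After `crossDown_sub_one` both rays start at `o - (½, ½)`, so together they form a vertical
line, which a closed walk crosses an even number of times. -/
theorem crossLine_eq_zero {e o : ℤ × ℤ} (Z : latticeGraph.Walk e e) (ho : o ∉ Z.support) :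
    crossLine o Z = 0 := by
  rw [crossLine, crossDown_sub_one Z ho, crossUp, crossDown, ← parity_xor,
    parity_congr (Q := fun p q => Xor (p.1 ≤ o.1 - 1) (q.1 ≤ o.1 - 1)),
    parity_xor_endpoints (fun p : ℤ × ℤ => p.1 ≤ o.1 - 1), CharTwo.add_self_eq_zero]
  intro d _
  have := d.adj
  simp only [latticeGraph_adj, HStep, Xor] at this ⊢
  omega

theorem crossLine_eq_of_walk {c d o : ℤ × ℤ} (W W' : latticeGraph.Walk c d)
    (hW : o ∉ W.support) (hW' : o ∉ W'.support) : crossLine o W = crossLine o W' := by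
  have := crossLine_eq_zero (W.append W'.reverse) (o := o)
    (by simp [mem_support_append_iff, support_reverse, hW, hW'])
  rwa [crossLine_append, crossLine_reverse, CharTwo.add_eq_zero] at this

theorem crossLine_add_crossLine {a b c d : ℤ × ℤ} (A : latticeGraph.Walk a b)
    (B : latticeGraph.Walk c d) (hAB : ∀ x ∈ B.support, x ∉ A.support) :
    crossLine a B + crossLine b B =
      crossDown c A + crossDown d A + (crossDown a B + crossDown b B) := by
  rw [crossLine, crossLine, crossDown_add_crossDown_eq_crossUp_add_crossUp A B hAB]
  ring

theorem crossLine_reciprocity {a b c d : ℤ × ℤ} (A : latticeGraph.Walk a b)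
    (B : latticeGraph.Walk c d) (hAB : ∀ x ∈ B.support, x ∉ A.support) :
    crossLine a B + crossLine b B = crossLine c A + crossLine d A := by
  rw [crossLine_add_crossLine A B hAB, crossLine_add_crossLine B A fun x hA hB => hAB x hB hA]
  ring

def JoinedAvoiding (F : Finset (ℤ × ℤ)) (p q : ℤ × ℤ) : Prop :=
  ∃ W : latticeGraph.Walk p q, ∀ x ∈ W.support, x ∉ F

namespace JoinedAvoiding

variable {F : Finset (ℤ × ℤ)} {p q r : ℤ × ℤ}

theorem symm (h : JoinedAvoiding F p q) : JoinedAvoiding F q p := by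
  obtain ⟨W, hW⟩ := h
  exact ⟨W.reverse, by simpa using hW⟩

theorem trans (h : JoinedAvoiding F p q) (h' : JoinedAvoiding F q r) : JoinedAvoiding F p r := by
  obtain ⟨W, hW⟩ := h
  obtain ⟨W', hW'⟩ := h'
  exact ⟨W.append W', fun x hx => (mem_support_append_iff W W').mp hx |>.elim (hW x) (hW' x)⟩

end JoinedAvoiding

theorem joinedAvoiding_line {F : Finset (ℤ × ℤ)} (f : ℤ → ℤ × ℤ)
    (hf : ∀ k, latticeGraph.Adj (f k) (f (k + 1))) {i j : ℤ} (hij : i ≤ j)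
    (hF : ∀ k, i ≤ k → k ≤ j → f k ∉ F) : JoinedAvoiding F (f i) (f j) := by
  induction j, hij using Int.leInduction with
  | base => exact ⟨nil, by simpa using hF i le_rfl le_rfl⟩
  | succ j hij ih =>
    obtain ⟨W, hW⟩ := ih fun k hik hkj => hF k hik (by omega)
    refine ⟨W.concat (hf j), fun x hx => ?_⟩
    rw [support_concat, List.mem_append, List.mem_singleton] at hx
    rcases hx with hx | rfl
    · exact hW x hx
    · exact hF _ (by omega) le_rfl

/-- One of the rays leaving `s` upwards, to the right, downwards or to the left misses `F`. -/
theorem exists_free_ray {F : Finset (ℤ × ℤ)} (hF : F.card ≤ 3) (s : ℤ × ℤ) :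
    (∀ f ∈ F, f.1 = s.1 → f.2 ≤ s.2) ∨ (∀ f ∈ F, f.2 = s.2 → f.1 ≤ s.1) ∨
      (∀ f ∈ F, f.1 = s.1 → s.2 ≤ f.2) ∨ (∀ f ∈ F, f.2 = s.2 → s.1 ≤ f.1) := by
  by_contra! h
  obtain ⟨⟨f₁, h₁, hf₁⟩, ⟨f₂, h₂, hf₂⟩, ⟨f₃, h₃, hf₃⟩, ⟨f₄, h₄, hf₄⟩⟩ := h
  have hsub : ({f₁, f₂, f₃, f₄} : Finset (ℤ × ℤ)) ⊆ F := by
    simp [Finset.insert_subset_iff, h₁, h₂, h₃, h₄]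
  have hcard : ({f₁, f₂, f₃, f₄} : Finset (ℤ × ℤ)).card = 4 := by
    rw [Finset.card_insert_of_notMem, Finset.card_insert_of_notMem, Finset.card_pair] <;>
      simp only [Finset.mem_insert, Finset.mem_singleton, Prod.ext_iff, ne_eq] <;> omega
  have := Finset.card_le_card hsub
  omega

/-- Follow a ray from `s` that misses `F` out of a box containing `F`, then go along the boundary of
the box to its corner. -/
theorem joinedAvoiding_corner {F : Finset (ℤ × ℤ)} (hF : F.card ≤ 3) {s : ℤ × ℤ} (hs : s ∉ F)
    {R : ℤ} (hsR : -R < s.1 ∧ s.1 < R ∧ -R < s.2 ∧ s.2 < R)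
    (hFR : ∀ p ∈ F, -R < p.1 ∧ p.1 < R ∧ -R < p.2 ∧ p.2 < R) : JoinedAvoiding F s (R, R) := by
  have frame (p : ℤ × ℤ) (hp : p.1 = R ∨ p.1 = -R ∨ p.2 = R ∨ p.2 = -R) : p ∉ F := fun hpF => by
    have := hFR p hpF; omega
  have hor (y k : ℤ) : latticeGraph.Adj (k, y) (k + 1, y) := by simp
  have ver (x k : ℤ) : latticeGraph.Adj (x, k) (x, k + 1) := by simp
  have top := joinedAvoiding_line (fun x => (x, R)) (hor R) (F := F) (i := -R) (j := R) (by omega)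
    fun k _ _ => frame _ (by simp)
  have right := joinedAvoiding_line (fun y => (R, y)) (ver R) (F := F) (i := -R) (j := R)
    (by omega) fun k _ _ => frame _ (by simp)
  rcases exists_free_ray hF s with h | h | h | h
  · refine (joinedAvoiding_line (fun y => (s.1, y)) (ver s.1) hsR.2.2.2.le fun k hk _ hkF => ?_).trans
      (joinedAvoiding_line (fun x => (x, R)) (hor R) hsR.2.1.le fun k _ _ => frame _ (by simp))
    obtain rfl : k = s.2 := by have := h _ hkF rfl; omega
    exact hs hkF
  · refine (joinedAvoiding_line (fun x => (x, s.2)) (hor s.2) hsR.2.1.le fun k hk _ hkF => ?_).trans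
      (joinedAvoiding_line (fun y => (R, y)) (ver R) hsR.2.2.2.le fun k _ _ => frame _ (by simp))
    obtain rfl : k = s.1 := by have := h _ hkF rfl; omega
    exact hs hkF
  · refine ((joinedAvoiding_line (fun y => (s.1, y)) (ver s.1) hsR.2.2.1.le
      fun k _ hk hkF => ?_).symm.trans (joinedAvoiding_line (fun x => (x, -R)) (hor (-R))
      hsR.2.1.le fun k _ _ => frame _ (by simp))).trans right
    obtain rfl : k = s.2 := by have := h _ hkF rfl; omega
    exact hs hkF
  · refine ((joinedAvoiding_line (fun x => (x, s.2)) (hor s.2) hsR.1.le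
      fun k _ hk hkF => ?_).symm.trans (joinedAvoiding_line (fun y => (-R, y)) (ver (-R))
      hsR.2.2.2.le fun k _ _ => frame _ (by simp))).trans top
    obtain rfl : k = s.1 := by have := h _ hkF rfl; omega
    exact hs hkF

theorem joinedAvoiding_of_card_le_three {F : Finset (ℤ × ℤ)} (hF : F.card ≤ 3) {s t : ℤ × ℤ}
    (hs : s ∉ F) (ht : t ∉ F) : JoinedAvoiding F s t := by
  set R : ℤ := 1 + ((insert s (insert t F)).sup fun p => p.1.natAbs + p.2.natAbs : ℕ)
  have hR : ∀ p ∈ insert s (insert t F), -R < p.1 ∧ p.1 < R ∧ -R < p.2 ∧ p.2 < R := by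
    intro p hp
    have := Finset.le_sup (f := fun p : ℤ × ℤ => p.1.natAbs + p.2.natAbs) hp
    omega
  have hFR (p : ℤ × ℤ) (hp : p ∈ F) := hR p (by simp [hp])
  exact (joinedAvoiding_corner hF hs (hR s (by simp)) hFR).trans
    (joinedAvoiding_corner hF ht (hR t (by simp)) hFR).symm

/-- A triangle on `b, c, d` whose sides avoid `a` and the opposite corner. -/
structure Triangle (a b c d : ℤ × ℤ) where
  cd : latticeGraph.Walk c d
  bd : latticeGraph.Walk b d
  bc : latticeGraph.Walk b c
  a_cd : a ∉ cd.support
  b_cd : b ∉ cd.support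
  a_bd : a ∉ bd.support
  c_bd : c ∉ bd.support
  a_bc : a ∉ bc.support
  d_bc : d ∉ bc.support

namespace Triangle

variable {a b c d : ℤ × ℤ}

def linkSum (T : Triangle a b c d) : ZMod 2 :=
  crossLine a T.cd + crossLine b T.cd + (crossLine a T.bd + crossLine c T.bd) +
    (crossLine a T.bc + crossLine d T.bc)

theorem linkSum_eq (T T' : Triangle a b c d) : T.linkSum = T'.linkSum := by
  simp only [linkSum, crossLine_eq_of_walk T.cd T'.cd T.a_cd T'.a_cd,
    crossLine_eq_of_walk T.cd T'.cd T.b_cd T'.b_cd, crossLine_eq_of_walk T.bd T'.bd T.a_bd T'.a_bd,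
    crossLine_eq_of_walk T.bd T'.bd T.c_bd T'.c_bd, crossLine_eq_of_walk T.bc T'.bc T.a_bc T'.a_bc,
    crossLine_eq_of_walk T.bc T'.bc T.d_bc T'.d_bc]

def swapBC (T : Triangle a b c d) : Triangle a c b d where
  cd := T.bd
  bd := T.cd
  bc := T.bc.reverse
  a_cd := T.a_bd
  b_cd := T.c_bd
  a_bd := T.a_cd
  c_bd := T.b_cd
  a_bc := by simpa using T.a_bc
  d_bc := by simpa using T.d_bc

def swapCD (T : Triangle a b c d) : Triangle a b d c where
  cd := T.cd.reverse
  bd := T.bc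
  bc := T.bd
  a_cd := by simpa using T.a_cd
  b_cd := by simpa using T.b_cd
  a_bd := T.a_bc
  c_bd := T.d_bc
  a_bc := T.a_bd
  d_bc := T.c_bd

theorem linkSum_swapBC (T : Triangle a b c d) : T.swapBC.linkSum = T.linkSum := by
  simp only [linkSum, swapBC, crossLine_reverse]; ring

theorem linkSum_swapCD (T : Triangle a b c d) : T.swapCD.linkSum = T.linkSum := by
  simp only [linkSum, swapCD, crossLine_reverse]; ring

theorem exists_avoiding (h : [a, b, c, d].Nodup) {e : ℤ × ℤ} (he : e ∉ ({b, c, d} : Finset _)) :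
    ∃ T : Triangle a b c d, e ∉ T.cd.support ∧ e ∉ T.bd.support ∧ e ∉ T.bc.support := by
  simp only [List.nodup_cons, List.mem_cons, List.not_mem_nil, or_false, not_or] at h
  simp only [Finset.mem_insert, Finset.mem_singleton, not_or] at he
  obtain ⟨cd, hcd⟩ := joinedAvoiding_of_card_le_three (F := {a, b, e}) (s := c) (t := d)
    Finset.card_le_three (by simp; tauto) (by simp; tauto)
  obtain ⟨bd, hbd⟩ := joinedAvoiding_of_card_le_three (F := {a, c, e}) (s := b) (t := d)
    Finset.card_le_three (by simp; tauto) (by simp; tauto)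
  obtain ⟨bc, hbc⟩ := joinedAvoiding_of_card_le_three (F := {a, d, e}) (s := b) (t := c)
    Finset.card_le_three (by simp; tauto) (by simp; tauto)
  exact ⟨⟨cd, bd, bc, fun h => hcd a h (by simp), fun h => hcd b h (by simp),
    fun h => hbd a h (by simp), fun h => hbd c h (by simp), fun h => hbc a h (by simp),
    fun h => hbc d h (by simp)⟩, fun h => hcd e h (by simp), fun h => hbd e h (by simp),
    fun h => hbc e h (by simp)⟩

end Triangle

open Classical in
/-- The common value of `Triangle.linkSum` (and `0` when there is no triangle). -/
noncomputable def linkInvariant (a b c d : ℤ × ℤ) : ZMod 2 :=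
  if h : Nonempty (Triangle a b c d) then h.some.linkSum else 0

theorem Triangle.linkSum_eq_linkInvariant {a b c d : ℤ × ℤ} (T : Triangle a b c d) :
    T.linkSum = linkInvariant a b c d := by
  rw [linkInvariant, dif_pos ⟨T⟩]
  exact T.linkSum_eq _

theorem linkInvariant_swap_bc (a b c d : ℤ × ℤ) :
    linkInvariant a c b d = linkInvariant a b c d := by
  by_cases h : Nonempty (Triangle a b c d)
  · obtain ⟨T⟩ := h
    rw [← T.linkSum_eq_linkInvariant, ← T.swapBC.linkSum_eq_linkInvariant, T.linkSum_swapBC]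
  · have h' : ¬ Nonempty (Triangle a c b d) := fun ⟨T⟩ => h ⟨T.swapBC⟩
    rw [linkInvariant, linkInvariant, dif_neg h, dif_neg h']

theorem linkInvariant_swap_cd (a b c d : ℤ × ℤ) :
    linkInvariant a b d c = linkInvariant a b c d := by
  by_cases h : Nonempty (Triangle a b c d)
  · obtain ⟨T⟩ := h
    rw [← T.linkSum_eq_linkInvariant, ← T.swapCD.linkSum_eq_linkInvariant, T.linkSum_swapCD]
  · have h' : ¬ Nonempty (Triangle a b d c) := fun ⟨T⟩ => h ⟨T.swapCD⟩
    rw [linkInvariant, linkInvariant, dif_neg h, dif_neg h']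

/-- Moving `a` across an edge changes the three sums `crossLine a W + crossLine a' W` by the
crossings of that edge with the lines through the ends of `W`, and each of `b, c, d` is an end of
two of the three sides. -/
theorem linkInvariant_step₁ {a a' b c d : ℤ × ℤ} (h : latticeGraph.Adj a a')
    (ha : [a, b, c, d].Nodup) (ha' : [a', b, c, d].Nodup) :
    linkInvariant a b c d = linkInvariant a' b c d := by
  have ha'' : a' ∉ ({b, c, d} : Finset _) := by simp_all
  obtain ⟨T, hcd, hbd, hbc⟩ := Triangle.exists_avoiding ha ha''
  let T' : Triangle a' b c d := { T with a_cd := hcd, a_bd := hbd, a_bc := hbc }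
  have disj {x y : ℤ × ℤ} (W : latticeGraph.Walk x y) (haW : a ∉ W.support)
      (ha'W : a' ∉ W.support) : ∀ z ∈ W.support, z ∉ h.toWalk.support := fun z hz => by
    simpa [h.support_toWalk] using ⟨ne_of_mem_of_not_mem hz haW, ne_of_mem_of_not_mem hz ha'W⟩
  have h₁ := crossLine_reciprocity h.toWalk T.cd (disj _ T.a_cd hcd)
  have h₂ := crossLine_reciprocity h.toWalk T.bd (disj _ T.a_bd hbd)
  have h₃ := crossLine_reciprocity h.toWalk T.bc (disj _ T.a_bc hbc)
  rw [← T.linkSum_eq_linkInvariant, ← T'.linkSum_eq_linkInvariant]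
  simp only [Triangle.linkSum, T']
  grind

/-- The sides at `b` are prolonged by the edge `b' → b`, and `crossLine_reciprocity` accounts for
the side `cd`. -/
theorem linkInvariant_step₂ {a b b' c d : ℤ × ℤ} (h : latticeGraph.Adj b b')
    (hb : [a, b, c, d].Nodup) (hb' : [a, b', c, d].Nodup) :
    linkInvariant a b c d = linkInvariant a b' c d := by
  have hb'' : b' ∉ ({b, c, d} : Finset _) := by have := h.ne'; grind
  obtain ⟨T, hcd, -, -⟩ := Triangle.exists_avoiding hb hb''
  simp only [List.nodup_cons, List.mem_cons, List.not_mem_nil, or_false, not_or] at hb hb'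
  let T' : Triangle a b' c d :=
    { cd := T.cd, bd := h.toWalk.reverse.append T.bd, bc := h.toWalk.reverse.append T.bc,
      a_cd := T.a_cd, b_cd := hcd
      a_bd := by simp [Adj.toWalk, T.a_bd]; tauto
      c_bd := by simp [Adj.toWalk, T.c_bd]; tauto
      a_bc := by simp [Adj.toWalk, T.a_bc]; tauto
      d_bc := by simp [Adj.toWalk, T.d_bc]; tauto }
  have h₁ := crossLine_reciprocity h.toWalk T.cd fun z hz => by
    simpa [h.support_toWalk] using ⟨ne_of_mem_of_not_mem hz T.b_cd, ne_of_mem_of_not_mem hz hcd⟩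
  rw [← T.linkSum_eq_linkInvariant, ← T'.linkSum_eq_linkInvariant]
  simp only [Triangle.linkSum, T', crossLine_append, crossLine_reverse]
  grind

section Moves

variable {a b c d : ℤ × ℤ}

theorem linkInvariant_move₁ {a' : ℤ × ℤ} (ha : [a, b, c, d].Nodup) (ha' : [a', b, c, d].Nodup) :
    linkInvariant a b c d = linkInvariant a' b c d := by
  obtain ⟨W, hW⟩ := joinedAvoiding_of_card_le_three (F := {b, c, d}) Finset.card_le_three
    (s := a) (t := a') (by grind) (by grind)
  refine W.apply_eq_apply_of_adj (S := {x | [x, b, c, d].Nodup})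
    (fun x y hxy hx hy => linkInvariant_step₁ hxy hx hy) fun x hx => ?_
  have := hW x hx
  grind

theorem linkInvariant_move₂ {b' : ℤ × ℤ} (hb : [a, b, c, d].Nodup) (hb' : [a, b', c, d].Nodup) :
    linkInvariant a b c d = linkInvariant a b' c d := by
  obtain ⟨W, hW⟩ := joinedAvoiding_of_card_le_three (F := {a, c, d}) Finset.card_le_three
    (s := b) (t := b') (by grind) (by grind)
  refine W.apply_eq_apply_of_adj (S := {x | [a, x, c, d].Nodup})
    (fun x y hxy hx hy => linkInvariant_step₂ hxy hx hy) fun x hx => ?_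
  have := hW x hx
  grind

theorem linkInvariant_move₃ {c' : ℤ × ℤ} (hc : [a, b, c, d].Nodup) (hc' : [a, b, c', d].Nodup) :
    linkInvariant a b c d = linkInvariant a b c' d := by
  rw [← linkInvariant_swap_bc, ← linkInvariant_swap_bc a b c',
    linkInvariant_move₂ (b' := c') (by grind) (by grind)]

theorem linkInvariant_move₄ {d' : ℤ × ℤ} (hd : [a, b, c, d].Nodup) (hd' : [a, b, c, d'].Nodup) :
    linkInvariant a b c d = linkInvariant a b c d' := by
  rw [← linkInvariant_swap_cd, ← linkInvariant_swap_cd a b c d',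
    linkInvariant_move₃ (c' := d') (by grind) (by grind)]

theorem linkInvariant_eq_row (h : [a, b, c, d].Nodup) {Y : ℤ}
    (hY : a.2 < Y ∧ b.2 < Y ∧ c.2 < Y ∧ d.2 < Y) :
    linkInvariant a b c d = linkInvariant (0, Y) (1, Y) (2, Y) (3, Y) := by
  rw [linkInvariant_move₁ (a' := (0, Y)), linkInvariant_move₂ (b' := (1, Y)),
    linkInvariant_move₃ (c' := (2, Y)), linkInvariant_move₄ (d' := (3, Y))] <;>
  simp only [List.nodup_cons, List.mem_cons, List.not_mem_nil, or_false, not_or, Prod.ext_iff,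
    List.nodup_nil, not_false_eq_true, and_true] at h ⊢ <;> omega

end Moves

theorem linkInvariant_canonical : linkInvariant (0, 0) (1, 0) (2, 0) (3, 0) = 1 := by
  let T : Triangle (0, 0) (1, 0) (2, 0) (3, 0) :=
    { cd := (by simp : latticeGraph.Adj (2, 0) (3, 0)).toWalk
      bd := .cons (by simp : latticeGraph.Adj (1, 0) (1, 1)) <|
        .cons (by simp : latticeGraph.Adj (1, 1) (2, 1)) <|
        .cons (by simp : latticeGraph.Adj (2, 1) (3, 1)) <|
        (by simp : latticeGraph.Adj (3, 1) (3, 0)).toWalk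
      bc := (by simp : latticeGraph.Adj (1, 0) (2, 0)).toWalk
      a_cd := by decide
      b_cd := by decide
      a_bd := by decide
      c_bd := by decide
      a_bc := by decide
      d_bc := by decide }
  rw [← T.linkSum_eq_linkInvariant]
  decide

theorem linkInvariant_eq_one {a b c d : ℤ × ℤ} (h : [a, b, c, d].Nodup) :
    linkInvariant a b c d = 1 := by
  set Y : ℤ := 1 + a.2.natAbs + b.2.natAbs + c.2.natAbs + d.2.natAbs
  rw [linkInvariant_eq_row h (Y := Y) (by omega),
    ← linkInvariant_eq_row (a := (0, 0)) (b := (1, 0)) (c := (2, 0)) (d := (3, 0)) (by decide)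
      (by dsimp only; omega), linkInvariant_canonical]

/-- Taking `k = l` in `hW`: no hub lies on a walk between two other hubs.

The triangle on `c 1, c 2, c 3` computes `linkInvariant (c 0) (c 1) (c 2) (c 3) = 1`. By
`crossLine_add_crossLine` on the three matchings of `c 0, …, c 3`, its `linkSum` is the sum over
`k ≤ 3` of `crossDown (c k)` of the triangle opposite to `c k`; moving `c k` to `c 4` along `W k 4`
turns this into a sum in which every walk appears twice. -/
theorem false_of_K5_drawing (c : Fin 5 → ℤ × ℤ) (W : ∀ i j, latticeGraph.Walk (c i) (c j))
    (hW : ∀ i j k l, i ≠ k → i ≠ l → j ≠ k → j ≠ l → ∀ x ∈ (W i j).support, x ∉ (W k l).support) :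
    False := by
  have hub (i j k : Fin 5) (hi : i ≠ k) (hj : j ≠ k) : c k ∉ (W i j).support := fun h =>
    hW i j k k hi hi hj hj _ h (W k k).start_mem_support
  have disj (i j k l : Fin 5) (h : [i, j, k, l].Nodup) :
      ∀ x ∈ (W k l).support, x ∉ (W i j).support :=
    hW k l i j (by simp at h; tauto) (by simp at h; tauto) (by simp at h; tauto)
      (by simp at h; tauto)
  have tri (i j k l : Fin 5) (h : [i, j, k, l, 4].Nodup) :
      crossDown (c l) (W i j) + crossDown (c l) (W j k) + crossDown (c l) (W i k) =
        crossDown (c 4) (W i j) + crossDown (c 4) (W j k) + crossDown (c 4) (W i k) := by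
    have := crossDown_eq_of_walk ((W i j).append ((W j k).append (W i k).reverse)) (W l 4)
      fun x hx => by
        simp only [mem_support_append_iff, support_reverse, List.mem_reverse, not_or]
        exact ⟨disj i j l 4 (h.sublist (by simp)) x hx, disj j k l 4 (h.sublist (by simp)) x hx,
          disj i k l 4 (h.sublist (by simp)) x hx⟩
    simpa only [crossDown_append, crossDown_reverse, add_assoc] using this
  let T : Triangle (c 0) (c 1) (c 2) (c 3) :=
    ⟨W 2 3, W 1 3, W 1 2, hub 2 3 0 (by decide) (by decide), hub 2 3 1 (by decide) (by decide),
      hub 1 3 0 (by decide) (by decide), hub 1 3 2 (by decide) (by decide),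
      hub 1 2 0 (by decide) (by decide), hub 1 2 3 (by decide) (by decide)⟩
  have hc : [c 0, c 1, c 2, c 3].Nodup := by
    have ne {i j : Fin 5} (h : i ≠ j) : c i ≠ c j :=
      ne_of_mem_of_not_mem (W i i).start_mem_support (hub i i j h h)
    simp only [List.nodup_cons, List.mem_cons, List.not_mem_nil, or_false, not_or, List.nodup_nil,
      not_false_eq_true, and_true]
    refine ⟨⟨?_, ?_, ?_⟩, ⟨?_, ?_⟩, ?_⟩ <;> apply ne <;> decide
  have hT := linkInvariant_eq_one hc
  rw [← T.linkSum_eq_linkInvariant] at hT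
  have m₁ := crossLine_add_crossLine (W 0 1) (W 2 3) (disj 0 1 2 3 (by decide))
  have m₂ := crossLine_add_crossLine (W 0 2) (W 1 3) (disj 0 2 1 3 (by decide))
  have m₃ := crossLine_add_crossLine (W 0 3) (W 1 2) (disj 0 3 1 2 (by decide))
  have t₀ := tri 1 2 3 0 (by decide)
  have t₁ := tri 0 2 3 1 (by decide)
  have t₂ := tri 0 1 3 2 (by decide)
  have t₃ := tri 0 1 2 3 (by decide)
  simp only [Triangle.linkSum, T] at hT
  grind

theorem not_isMinor_completeGraph_five : ¬ IsMinor (completeGraph (Fin 5)) latticeGraph := by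
  rintro ⟨φ, hconn, hdisj, hadj⟩
  have hne (i : Fin 5) : (φ i).Nonempty :=
    let ⟨v⟩ := (hconn i).nonempty
    ⟨v.1, v.2⟩
  choose c hc using hne
  have arc (i j : Fin 5) : ∃ W : latticeGraph.Walk (c i) (c j), ∀ x ∈ W.support, x ∈ φ i ∪ φ j := by
    rcases eq_or_ne i j with rfl | hij
    · exact ⟨nil, by simpa using hc i⟩
    obtain ⟨u, hu, v, hv, huv⟩ := hadj i j hij
    obtain ⟨W₁, h₁⟩ := (hconn i).exists_walk (hc i) hu
    obtain ⟨W₂, h₂⟩ := (hconn j).exists_walk hv (hc j)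
    refine ⟨W₁.append (cons huv W₂), fun x hx => ?_⟩
    rw [mem_support_append_iff, support_cons, List.mem_cons] at hx
    rcases hx with hx | hx | hx
    exacts [Or.inl (h₁ x hx), Or.inl (hx ▸ hu), Or.inr (h₂ x hx)]
  choose W hW using arc
  refine false_of_K5_drawing c W fun i j k l hik hil hjk hjl x hx hx' => ?_
  rcases hW i j x hx with h | h <;> rcases hW k l x hx' with h' | h'
  exacts [Set.disjoint_left.mp (hdisj hik) h h', Set.disjoint_left.mp (hdisj hil) h h',
    Set.disjoint_left.mp (hdisj hjk) h h', Set.disjoint_left.mp (hdisj hjl) h h']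

end Lattice

theorem apexGrid_adj_inl {n : ℕ} {p q : Fin n × Fin n} :
    (apexGrid n).Adj (Sum.inl p) (Sum.inl q) ↔ p ≠ q ∧ (GridAdj n p q ∨ GridAdj n q p) := by
  simp only [apexGrid, SimpleGraph.fromRel_adj, Sum.inl.injEq, exists_and_left, exists_eq_left',
    reduceCtorEq, and_false, exists_false, or_false, ne_eq]

/-- The grid vertices of `A_n` keep their coordinates; the apex, which is deleted, is sent to `0`. -/
def apexGridToLattice (n : ℕ) : (apexGrid n).induce {Sum.inr ()}ᶜ →g latticeGraph where
  toFun v := Sum.elim (fun p => ((p.1 : ℤ), (p.2 : ℤ))) (fun _ => 0) v.1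
  map_rel' := by
    rintro ⟨p | _, hp⟩ ⟨q | _, hq⟩ h
    · replace h : (apexGrid n).Adj (Sum.inl p) (Sum.inl q) := h
      simp only [apexGrid_adj_inl, GridAdj, Fin.ext_iff, Sum.elim_inl, latticeGraph_adj] at h ⊢
      omega
    exacts [(hq rfl).elim, (hp rfl).elim, (hp rfl).elim]

theorem apexGridToLattice_injective (n : ℕ) : Function.Injective (apexGridToLattice n) := by
  rintro ⟨p | _, hp⟩ ⟨q | _, hq⟩ h
  · simp_all [apexGridToLattice, Prod.ext_iff, Fin.ext_iff]
  exacts [(hq rfl).elim, (hp rfl).elim, (hp rfl).elim]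

theorem statement12_general (n : ℕ) :
    ¬ IsMinor (SimpleGraph.completeGraph (Fin 6)) (apexGrid n) := by
  intro h
  exact Lattice.not_isMinor_completeGraph_five <|
    (h.induce_compl_singleton (Sum.inr ())).map (apexGridToLattice n) (apexGridToLattice_injective n)

/-- For every positive integer `n`, the apex `n × n` grid `A_n` is `K_6`-minor-free. -/
theorem statement12 (n : ℕ) (hn : 0 < n) :
    ¬ IsMinor (SimpleGraph.completeGraph (Fin 6)) (apexGrid n) :=
  statement12_general n
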